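/- Let k ≥ 0 and let K = (0,1)³ be the open unit cube. Define δE^{3,I}_{k+2} := span of the vector fields x p (y∇z − z∇y) with p ∈ 𝒫̃_{k+1}(y,z), y q (z∇x − x∇z) with q ∈ 𝒫̃_{k+1}(z,x), and z r (x∇y − y∇x) with r ∈ 𝒫̃_{k+1}(x,y). Then {v ∈ 𝐏_{k+1} ⊕ ∇×δE^{3,I}_{k+2} : v·n = 0 on ∂K and ∇·v = 0} = {v ∈ 𝐏_{k+1} : v·n = 0 on ∂K and ∇·v = 0}; in particular, the normal trace on ∂K of a nonzero element of ∇×δE^{3,I}_{k+2} never coincides with the normal trace of an element of 𝐏_{k+1}, except when both normal traces vanish. -/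

import Mathlib

open MvPolynomial

/-- Polynomials on `ℝ³`. -/
abbrev R3 := MvPolynomial (Fin 3) ℝ

/-- Polynomial vector fields on `ℝ³`. -/
abbrev Vec3 := R3 × R3 × R3

/-- The three-dimensional vector curl. -/
noncomputable def curl3 (v : Vec3) : Vec3 :=
  (pderiv 1 v.2.2 - pderiv 2 v.2.1,
   pderiv 2 v.1 - pderiv 0 v.2.2,
   pderiv 0 v.2.1 - pderiv 1 v.1)

/-- The divergence `∇·v = ∂ₓ v₁ + ∂_y v₂ + ∂_z v₃`. -/
noncomputable def div3 (v : Vec3) : R3 :=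
  pderiv 0 v.1 + pderiv 1 v.2.1 + pderiv 2 v.2.2

/-- Membership in `𝐏_m`: all three components of total degree at most `m`. -/
def memP3 (m : ℕ) (v : Vec3) : Prop :=
  v.1.totalDegree ≤ m ∧ v.2.1.totalDegree ≤ m ∧ v.2.2.totalDegree ≤ m

/-- Membership in `δE^{3,I}_{k+2}`, the span of the vector fields
`x p (y∇z − z∇y) = (0, −x p z, x p y)` with `p ∈ 𝒫̃_{k+1}(y,z)`,
`y q (z∇x − x∇z) = (y q z, 0, −y q x)` with `q ∈ 𝒫̃_{k+1}(z,x)`, and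
`z r (x∇y − y∇x) = (−z r y, z r x, 0)` with `r ∈ 𝒫̃_{k+1}(x,y)`. -/
noncomputable def memDeltaE (k : ℕ) (u : Vec3) : Prop :=
  ∃ p q r : R3,
    p.IsHomogeneous (k + 1) ∧ (∀ m ∈ p.support, m 0 = 0) ∧
    q.IsHomogeneous (k + 1) ∧ (∀ m ∈ q.support, m 1 = 0) ∧
    r.IsHomogeneous (k + 1) ∧ (∀ m ∈ r.support, m 2 = 0) ∧
    u = (0, -(X 0 * p * X 2), X 0 * p * X 1)
        + (X 1 * q * X 2, 0, -(X 1 * q * X 0))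
        + (-(X 2 * r * X 1), X 2 * r * X 0, 0)

/-- The normal trace `v·n` of the polynomial vector field `v` vanishes on the
boundary of the unit cube `(0,1)³`. -/
def normalTraceZero (v : Vec3) : Prop :=
  (∀ y z : ℝ, y ∈ Set.Icc (0 : ℝ) 1 → z ∈ Set.Icc (0 : ℝ) 1 →
    eval ![0, y, z] v.1 = 0 ∧ eval ![1, y, z] v.1 = 0) ∧
  (∀ x z : ℝ, x ∈ Set.Icc (0 : ℝ) 1 → z ∈ Set.Icc (0 : ℝ) 1 →
    eval ![x, 0, z] v.2.1 = 0 ∧ eval ![x, 1, z] v.2.1 = 0) ∧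
  (∀ x y : ℝ, x ∈ Set.Icc (0 : ℝ) 1 → y ∈ Set.Icc (0 : ℝ) 1 →
    eval ![x, y, 0] v.2.2 = 0 ∧ eval ![x, y, 1] v.2.2 = 0)

lemma supp_deg {p : R3} {n : ℕ} (hp : p.IsHomogeneous n) {μ : Fin 3 →₀ ℕ}
    (hμ : μ ∈ p.support) : Finsupp.degree μ = n := by
  by_contra h
  exact (mem_support_iff.mp hμ) (hp.coeff_eq_zero h)

lemma deg3 (μ : Fin 3 →₀ ℕ) : Finsupp.degree μ = μ 0 + μ 1 + μ 2 := by
  rw [Finsupp.degree_apply, Finset.sum_subset (Finset.subset_univ _)]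
  · exact Fin.sum_univ_three μ
  · intro i _ hi
    simpa using Finsupp.notMem_support_iff.mp hi

lemma pderiv_zero_of_support {f : R3} {j : Fin 3} (h : ∀ μ ∈ f.support, μ j = 0) :
    pderiv j f = 0 := by
  apply pderiv_eq_zero_of_notMem_vars
  intro hv
  obtain ⟨d, hd, hjd⟩ := (mem_vars _).mp hv
  exact (Finsupp.mem_support_iff.mp hjd) (h d hd)

lemma aeval_invariant {f : R3} {j : Fin 3} (h : ∀ μ ∈ f.support, μ j = 0) (c : R3) :
    aeval (Function.update X j c) f = f := by
  have hv : ∀ i ∈ f.vars, Function.update (X : Fin 3 → R3) j c i = X i := by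
    intro i hi
    have : i ≠ j := by
      rintro rfl
      obtain ⟨d, hd, hjd⟩ := (mem_vars _).mp hi
      exact (Finsupp.mem_support_iff.mp hjd) (h d hd)
    simp [Function.update_of_ne this]
  calc aeval (Function.update X j c) f
      = eval₂Hom (algebraMap ℝ R3) (Function.update X j c) f := rfl
    _ = eval₂Hom (algebraMap ℝ R3) X f := eval₂Hom_congr' rfl (fun i h1 _ => hv i h1) rfl
    _ = f := by simpa [aeval_def] using aeval_X_left_apply (R := ℝ) f

lemma X_mul_pderiv_monomial (i : Fin 3) (μ : Fin 3 →₀ ℕ) (c : ℝ) :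
    X i * pderiv i (monomial μ c) = monomial μ (c * μ i) := by
  rw [pderiv_monomial]
  rcases Nat.eq_zero_or_pos (μ i) with h | h
  · simp [h]
  · have : X (R := ℝ) i * monomial (μ - Finsupp.single i 1) (c * μ i)
        = monomial (Finsupp.single i 1 + (μ - Finsupp.single i 1)) (c * μ i) := by
      rw [X, monomial_mul, one_mul]
    rw [this]
    have hμeq : Finsupp.single i 1 + (μ - Finsupp.single i 1) = μ := by
      ext a
      rcases eq_or_ne a i with rfl | hne
      · simp [Finsupp.single_apply]
        omega
      · simp [Finsupp.single_apply, hne, Ne.symm hne, Finsupp.tsub_apply]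
    rw [hμeq]

lemma euler3 {p : R3} {n : ℕ} (hp : p.IsHomogeneous n) :
    X 0 * pderiv 0 p + X 1 * pderiv 1 p + X 2 * pderiv 2 p = (n : ℝ) • p := by
  conv_lhs => rw [p.as_sum]
  rw [map_sum, map_sum, map_sum, Finset.mul_sum, Finset.mul_sum, Finset.mul_sum,
    ← Finset.sum_add_distrib, ← Finset.sum_add_distrib]
  conv_rhs => rw [p.as_sum, Finset.smul_sum]
  apply Finset.sum_congr rfl
  intro μ hμ
  rw [X_mul_pderiv_monomial, X_mul_pderiv_monomial, X_mul_pderiv_monomial,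
    ← map_add, ← map_add, smul_monomial]
  congr 1
  have := supp_deg hp hμ
  rw [deg3] at this
  rw [← this, smul_eq_mul]
  push_cast
  ring

lemma aeval_update_one_monomial (j : Fin 3) (μ : Fin 3 →₀ ℕ) (c : ℝ) :
    aeval (Function.update X j (1 : R3)) (monomial μ c) = monomial (Finsupp.erase j μ) c := by
  rw [aeval_monomial, monomial_eq]
  congr 1
  rw [Finsupp.prod_fintype _ _ (fun i => pow_zero _),
      Finsupp.prod_fintype _ _ (fun i => pow_zero _)]
  apply Finset.prod_congr rfl
  intro i _
  rcases eq_or_ne i j with rfl | hne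
  · simp [Finsupp.erase_same]
  · simp [Function.update_of_ne hne, Finsupp.erase_ne hne]

lemma aeval_update_zero_monomial (j : Fin 3) (μ : Fin 3 →₀ ℕ) (c : ℝ) :
    aeval (Function.update X j (0 : R3)) (monomial μ c)
      = if μ j = 0 then monomial μ c else 0 := by
  rw [aeval_monomial]
  rcases eq_or_ne (μ j) 0 with h | h
  · rw [if_pos h, monomial_eq]
    congr 1
    rw [Finsupp.prod_fintype _ _ (fun i => pow_zero _),
        Finsupp.prod_fintype _ _ (fun i => pow_zero _)]
    apply Finset.prod_congr rfl
    intro i _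
    rcases eq_or_ne i j with rfl | hne
    · simp [h]
    · simp [Function.update_of_ne hne]
  · rw [if_neg h]
    rw [Finsupp.prod_fintype _ _ (fun i => pow_zero _)]
    have : ∏ i : Fin 3, (Function.update (X : Fin 3 → R3) j 0 i) ^ μ i = 0 := by
      apply Finset.prod_eq_zero (Finset.mem_univ j)
      simp [zero_pow h]
    rw [this, mul_zero]

lemma coeff_sub1 (j : Fin 3) (f : R3) (n : Fin 3 →₀ ℕ) :
    coeff n (aeval (Function.update X j (1 : R3)) f)
      = ∑ μ ∈ f.support, if Finsupp.erase j μ = n then coeff μ f else 0 := by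
  conv_lhs => rw [f.as_sum]
  rw [map_sum]
  rw [coeff_sum]
  apply Finset.sum_congr rfl
  intro μ _
  rw [aeval_update_one_monomial, coeff_monomial]

lemma coeff_sub1_zero {j : Fin 3} {f : R3} {n : Fin 3 →₀ ℕ}
    (h : ∀ μ ∈ f.support, Finsupp.erase j μ ≠ n) :
    coeff n (aeval (Function.update X j (1 : R3)) f) = 0 := by
  rw [coeff_sub1]
  exact Finset.sum_eq_zero fun μ hμ => if_neg (h μ hμ)

lemma coeff_sub1_single {j : Fin 3} {f : R3} {n μ0 : Fin 3 →₀ ℕ}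
    (hμ0 : Finsupp.erase j μ0 = n)
    (h : ∀ μ ∈ f.support, Finsupp.erase j μ = n → μ = μ0) :
    coeff n (aeval (Function.update X j (1 : R3)) f) = coeff μ0 f := by
  rw [coeff_sub1]
  rw [Finset.sum_eq_single μ0]
  · rw [if_pos hμ0]
  · intro b hb hbne
    rcases eq_or_ne (Finsupp.erase j b) n with he | he
    · exact absurd (h b hb he) hbne
    · exact if_neg he
  · intro hμ0n
    rw [if_pos hμ0]
    exact notMem_support_iff.mp hμ0n

lemma coeff_sub0 {j : Fin 3} {f : R3} {n : Fin 3 →₀ ℕ} (hn : n j = 0) :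
    coeff n (aeval (Function.update X j (0 : R3)) f) = coeff n f := by
  conv_lhs => rw [f.as_sum]
  rw [map_sum, coeff_sum]
  conv_rhs => rw [f.as_sum, coeff_sum]
  apply Finset.sum_congr rfl
  intro μ _
  rw [aeval_update_zero_monomial]
  rcases eq_or_ne (μ j) 0 with h | h
  · rw [if_pos h]
  · rw [if_neg h, coeff_zero, coeff_monomial, if_neg]
    rintro rfl
    exact h hn

lemma eval_extend (g : R3) (i : Fin 3) (a : Fin 3 → ℝ)
    (h : ∀ t ∈ Set.Icc (0:ℝ) 1, eval (Function.update a i t) g = 0) :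
    ∀ t : ℝ, eval (Function.update a i t) g = 0 := by
  set F : Fin 3 → Polynomial ℝ :=
    Function.update (fun idx => Polynomial.C (a idx)) i Polynomial.X with hF
  have key : ∀ t : ℝ, Polynomial.eval t (aeval F g) = eval (Function.update a i t) g := by
    intro t
    rw [show Polynomial.eval t (aeval F g) = Polynomial.aeval t (aeval F g) by
      rw [Polynomial.coe_aeval_eq_eval]]
    rw [comp_aeval_apply]
    have : (fun idx => Polynomial.aeval t (F idx)) = fun idx => (Function.update a i t) idx := by
      funext idx
      rcases eq_or_ne idx i with rfl | hne
      · simp [hF]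
      · simp [hF, Function.update_of_ne hne]
    rw [this]
    exact congrFun (congrArg DFunLike.coe (coe_aeval_eq_eval (Function.update a i t))) g
  have hzero : aeval F g = 0 := by
    apply Polynomial.eq_zero_of_infinite_isRoot
    apply Set.Infinite.mono (s := Set.Icc (0:ℝ) 1)
    · intro t ht
      simp only [Set.mem_setOf_eq, Polynomial.IsRoot]
      rw [key t]
      exact h t ht
    · exact Set.Icc_infinite one_pos
  intro t
  rw [← key t, hzero]
  simp

lemma aeval_eq_eval' (a : Fin 3 → ℝ) (g : R3) : aeval a g = eval a g :=
  congrFun (congrArg DFunLike.coe (coe_aeval_eq_eval a)) g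

lemma subst_zero_of_eval (g : R3) (j : Fin 3) (c : ℝ)
    (h : ∀ a : Fin 3 → ℝ, eval (Function.update a j c) g = 0) :
    aeval (Function.update (X : Fin 3 → R3) j (C c)) g = 0 := by
  apply MvPolynomial.funext
  intro a
  rw [map_zero, ← aeval_eq_eval', comp_aeval_apply (f := Function.update (X : Fin 3 → R3) j (C c)) (aeval a) g]
  have : (fun i => aeval a (Function.update (X : Fin 3 → R3) j (C c) i))
      = Function.update a j c := by
    funext i
    rcases eq_or_ne i j with rfl | hne
    · simp
    · simp [Function.update_of_ne hne]
  rw [this, aeval_eq_eval', h a]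

lemma upd0 (v : Fin 3 → ℝ) (t : ℝ) : Function.update v 0 t = ![t, v 1, v 2] := by
  funext i; fin_cases i <;> simp [Function.update]

lemma upd1 (v : Fin 3 → ℝ) (t : ℝ) : Function.update v 1 t = ![v 0, t, v 2] := by
  funext i; fin_cases i <;> simp [Function.update]

lemma upd2 (v : Fin 3 → ℝ) (t : ℝ) : Function.update v 2 t = ![v 0, v 1, t] := by
  funext i; fin_cases i <;> simp [Function.update]

lemma face0 (g : R3) (c : ℝ)
    (h : ∀ y z : ℝ, y ∈ Set.Icc (0:ℝ) 1 → z ∈ Set.Icc (0:ℝ) 1 → eval ![c, y, z] g = 0) :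
    aeval (Function.update (X : Fin 3 → R3) 0 (C c)) g = 0 := by
  have h1 : ∀ y z : ℝ, z ∈ Set.Icc (0:ℝ) 1 → eval ![c, y, z] g = 0 := by
    intro y z hz
    have := eval_extend g 1 ![c, 0, z]
      (fun t ht => by rw [upd1]; simpa using h t z ht hz) y
    rw [upd1] at this; simpa using this
  have h2 : ∀ y z : ℝ, eval ![c, y, z] g = 0 := by
    intro y z
    have := eval_extend g 2 ![c, y, 0]
      (fun t ht => by rw [upd2]; simpa using h1 y t ht) z
    rw [upd2] at this; simpa using this
  apply subst_zero_of_eval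
  intro a
  rw [upd0]
  exact h2 (a 1) (a 2)

lemma face1 (g : R3) (c : ℝ)
    (h : ∀ x z : ℝ, x ∈ Set.Icc (0:ℝ) 1 → z ∈ Set.Icc (0:ℝ) 1 → eval ![x, c, z] g = 0) :
    aeval (Function.update (X : Fin 3 → R3) 1 (C c)) g = 0 := by
  have h1 : ∀ x z : ℝ, z ∈ Set.Icc (0:ℝ) 1 → eval ![x, c, z] g = 0 := by
    intro x z hz
    have := eval_extend g 0 ![0, c, z]
      (fun t ht => by rw [upd0]; simpa using h t z ht hz) x
    rw [upd0] at this; simpa using this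
  have h2 : ∀ x z : ℝ, eval ![x, c, z] g = 0 := by
    intro x z
    have := eval_extend g 2 ![x, c, 0]
      (fun t ht => by rw [upd2]; simpa using h1 x t ht) z
    rw [upd2] at this; simpa using this
  apply subst_zero_of_eval
  intro a
  rw [upd1]
  exact h2 (a 0) (a 2)

lemma face2 (g : R3) (c : ℝ)
    (h : ∀ x y : ℝ, x ∈ Set.Icc (0:ℝ) 1 → y ∈ Set.Icc (0:ℝ) 1 → eval ![x, y, c] g = 0) :
    aeval (Function.update (X : Fin 3 → R3) 2 (C c)) g = 0 := by
  have h1 : ∀ x y : ℝ, y ∈ Set.Icc (0:ℝ) 1 → eval ![x, y, c] g = 0 := by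
    intro x y hy
    have := eval_extend g 0 ![0, y, c]
      (fun t ht => by rw [upd0]; simpa using h t y ht hy) x
    rw [upd0] at this; simpa using this
  have h2 : ∀ x y : ℝ, eval ![x, y, c] g = 0 := by
    intro x y
    have := eval_extend g 1 ![x, 0, c]
      (fun t ht => by rw [upd1]; simpa using h1 x t ht) y
    rw [upd1] at this; simpa using this
  apply subst_zero_of_eval
  intro a
  rw [upd2]
  exact h2 (a 0) (a 1)

/-- Monomial exponent vector. -/
noncomputable def m3 (a b c : ℕ) : Fin 3 →₀ ℕ :=
  Finsupp.single 0 a + Finsupp.single 1 b + Finsupp.single 2 c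

@[simp] lemma m3_apply0 (a b c : ℕ) : m3 a b c 0 = a := by
  simp [m3, Finsupp.single_apply]
@[simp] lemma m3_apply1 (a b c : ℕ) : m3 a b c 1 = b := by
  simp [m3, Finsupp.single_apply]
@[simp] lemma m3_apply2 (a b c : ℕ) : m3 a b c 2 = c := by
  simp [m3, Finsupp.single_apply]

lemma eq_m3 (μ : Fin 3 →₀ ℕ) : μ = m3 (μ 0) (μ 1) (μ 2) := by
  ext i; fin_cases i <;> simp

lemma deg_le_of_mem_support {f : R3} {μ : Fin 3 →₀ ℕ} (h : μ ∈ f.support) :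
    μ 0 + μ 1 + μ 2 ≤ f.totalDegree := by
  rw [← deg3]
  exact le_totalDegree h

lemma coeff_sub1_top {j : Fin 3} {f : R3} {n : Fin 3 →₀ ℕ} {D : ℕ}
    (hf : f.totalDegree ≤ D) (hn : n j = 0) (hD : Finsupp.degree n = D) :
    coeff n (aeval (Function.update X j (1 : R3)) f) = coeff n f := by
  have hne : Finsupp.erase j n = n :=
    Finsupp.erase_of_notMem_support (by simp [Finsupp.mem_support_iff, hn])
  apply coeff_sub1_single hne
  intro μ hμ herase
  have hdμ : μ 0 + μ 1 + μ 2 ≤ D := le_trans (deg_le_of_mem_support hμ) hf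
  have hdn : n 0 + n 1 + n 2 = D := by rw [← deg3]; exact hD
  have hoff : ∀ i, i ≠ j → μ i = n i := by
    intro i hi
    rw [← herase, Finsupp.erase_ne hi]
  have hμj : μ j = 0 := by
    have hsum : ∑ i : Fin 3, μ i ≤ D := by rw [Fin.sum_univ_three]; exact hdμ
    have hsplit : ∑ i : Fin 3, μ i
        = μ j + ∑ i ∈ Finset.univ.erase j, μ i :=
      (Finset.add_sum_erase _ _ (Finset.mem_univ j)).symm
    have hesum : ∑ i ∈ Finset.univ.erase j, μ i
        = ∑ i ∈ Finset.univ.erase j, n i :=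
      Finset.sum_congr rfl (fun i hi => hoff i (Finset.ne_of_mem_erase hi))
    have hrest : ∑ i ∈ Finset.univ.erase j, n i = D := by
      have := Finset.add_sum_erase Finset.univ n (Finset.mem_univ j)
      rw [hn, zero_add, Fin.sum_univ_three] at this
      rw [this]; exact hdn
    omega
  ext i
  rcases eq_or_ne i j with rfl | hi
  · rw [hμj, hn]
  · exact hoff i hi

lemma pdX_ne {i j : Fin 3} (h : j ≠ i) : pderiv i (X j : R3) = 0 := pderiv_X_of_ne h

lemma comp1_formula (k : ℕ) (p q r : R3)
    (hp0 : pderiv 0 p = 0) (hq1 : pderiv 1 q = 0) (hr2 : pderiv 2 r = 0)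
    (heul : X 1 * pderiv 1 p + X 2 * pderiv 2 p = C ((k : ℝ) + 1) * p) :
    pderiv 1 (X 0 * p * X 1 + -(X 1 * q * X 0) + 0)
      - pderiv 2 (-(X 0 * p * X 2) + 0 + X 2 * r * X 0)
    = C ((k : ℝ) + 3) * (X 0 * p) - X 0 * q - X 0 * r := by
  have h3 : (C ((k : ℝ) + 3) : R3) = C (k : ℝ) + 3 := by
    rw [map_add, map_ofNat]
  have h1 : (C ((k : ℝ) + 1) : R3) = C (k : ℝ) + 1 := by
    rw [map_add, map_one]
  rw [h1] at heul
  simp only [map_add, map_neg, pderiv_mul, pderiv_X_self, hp0, hq1, hr2,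
    pdX_ne (show (0 : Fin 3) ≠ 1 by decide), pdX_ne (show (0 : Fin 3) ≠ 2 by decide),
    pdX_ne (show (1 : Fin 3) ≠ 0 by decide), pdX_ne (show (1 : Fin 3) ≠ 2 by decide),
    pdX_ne (show (2 : Fin 3) ≠ 0 by decide), pdX_ne (show (2 : Fin 3) ≠ 1 by decide),
    map_zero, h3]
  linear_combination (X 0 : R3) * heul

lemma comp2_formula (k : ℕ) (p q r : R3)
    (hp0 : pderiv 0 p = 0) (hq1 : pderiv 1 q = 0) (hr2 : pderiv 2 r = 0)
    (heul : X 0 * pderiv 0 q + X 2 * pderiv 2 q = C ((k : ℝ) + 1) * q) :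
    pderiv 2 (0 + X 1 * q * X 2 + -(X 2 * r * X 1))
      - pderiv 0 (X 0 * p * X 1 + -(X 1 * q * X 0) + 0)
    = C ((k : ℝ) + 3) * (X 1 * q) - X 1 * p - X 1 * r := by
  have h3 : (C ((k : ℝ) + 3) : R3) = C (k : ℝ) + 3 := by
    rw [map_add, map_ofNat]
  have h1 : (C ((k : ℝ) + 1) : R3) = C (k : ℝ) + 1 := by
    rw [map_add, map_one]
  rw [h1] at heul
  simp only [map_add, map_neg, pderiv_mul, pderiv_X_self, hp0, hq1, hr2,
    pdX_ne (show (0 : Fin 3) ≠ 1 by decide), pdX_ne (show (0 : Fin 3) ≠ 2 by decide),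
    pdX_ne (show (1 : Fin 3) ≠ 0 by decide), pdX_ne (show (1 : Fin 3) ≠ 2 by decide),
    pdX_ne (show (2 : Fin 3) ≠ 0 by decide), pdX_ne (show (2 : Fin 3) ≠ 1 by decide),
    map_zero, h3]
  linear_combination (X 1 : R3) * heul

lemma comp3_formula (k : ℕ) (p q r : R3)
    (hp0 : pderiv 0 p = 0) (hq1 : pderiv 1 q = 0) (hr2 : pderiv 2 r = 0)
    (heul : X 0 * pderiv 0 r + X 1 * pderiv 1 r = C ((k : ℝ) + 1) * r) :
    pderiv 0 (-(X 0 * p * X 2) + 0 + X 2 * r * X 0)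
      - pderiv 1 (0 + X 1 * q * X 2 + -(X 2 * r * X 1))
    = C ((k : ℝ) + 3) * (X 2 * r) - X 2 * p - X 2 * q := by
  have h3 : (C ((k : ℝ) + 3) : R3) = C (k : ℝ) + 3 := by
    rw [map_add, map_ofNat]
  have h1 : (C ((k : ℝ) + 1) : R3) = C (k : ℝ) + 1 := by
    rw [map_add, map_one]
  rw [h1] at heul
  simp only [map_add, map_neg, pderiv_mul, pderiv_X_self, hp0, hq1, hr2,
    pdX_ne (show (0 : Fin 3) ≠ 1 by decide), pdX_ne (show (0 : Fin 3) ≠ 2 by decide),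
    pdX_ne (show (1 : Fin 3) ≠ 0 by decide), pdX_ne (show (1 : Fin 3) ≠ 2 by decide),
    pdX_ne (show (2 : Fin 3) ≠ 0 by decide), pdX_ne (show (2 : Fin 3) ≠ 1 by decide),
    map_zero, h3]
  linear_combination (X 2 : R3) * heul

lemma coeff_W_zero {j : Fin 3} {W : R3} {n : Fin 3 →₀ ℕ} {D : ℕ}
    (hWD : W.totalDegree ≤ D)
    (hW0 : aeval (Function.update X j (0 : R3)) W = 0)
    (hnj : n j = 0) (hdeg : Finsupp.degree n = D) :
    coeff n (aeval (Function.update X j (1 : R3)) W) = 0 := by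
  rw [coeff_sub1_top hWD hnj hdeg, ← coeff_sub0 hnj, hW0, coeff_zero]

lemma coeff_A1_bizero {j l : Fin 3} (hjl : l ≠ j) {f : R3}
    (hfl : ∀ μ ∈ f.support, μ l = 0) {n : Fin 3 →₀ ℕ} (hnl : 1 ≤ n l) :
    coeff n (aeval (Function.update X j (1 : R3)) f) = 0 := by
  apply coeff_sub1_zero
  intro μ hμ he
  have : n l = μ l := by rw [← he, Finsupp.erase_ne hjl]
  rw [hfl μ hμ] at this
  omega

lemma deg_m3 (a b c : ℕ) : Finsupp.degree (m3 a b c) = a + b + c := by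
  rw [deg3]; simp

lemma deg_single (l : Fin 3) (K : ℕ) : Finsupp.degree (Finsupp.single l K) = K := by
  rcases Nat.eq_zero_or_pos K with rfl | hK
  · simp [Finsupp.degree]
  · rw [Finsupp.degree_apply, Finsupp.support_single_ne_zero _ (by omega)]
    simp

lemma keyrel {k : ℕ} {j lg lh : Fin 3} (hg : lg ≠ j) (hh : lh ≠ j)
    {W f g h : R3}
    (hW : W.totalDegree ≤ k + 1) (hW0 : aeval (Function.update X j (0 : R3)) W = 0)
    (hgl : ∀ μ ∈ g.support, μ lg = 0) (hgdeg : g.totalDegree ≤ k + 1)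
    (hhl : ∀ μ ∈ h.support, μ lh = 0) (hhdeg : h.totalDegree ≤ k + 1)
    (hid : aeval (Function.update X j (1 : R3)) W
      + (C ((k : ℝ) + 3) * f - aeval (Function.update X j (1 : R3)) g
         - aeval (Function.update X j (1 : R3)) h) = 0) :
    (∀ n : Fin 3 →₀ ℕ, n j = 0 → Finsupp.degree n = k + 1 → 1 ≤ n lg → 1 ≤ n lh →
      coeff n f = 0)
    ∧ ((k : ℝ) + 3) * coeff (Finsupp.single lg (k + 1)) f
        = coeff (Finsupp.single lg (k + 1)) h
    ∧ ((k : ℝ) + 3) * coeff (Finsupp.single lh (k + 1)) f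
        = coeff (Finsupp.single lh (k + 1)) g := by
  have hk3 : ((k : ℝ) + 3) ≠ 0 := by positivity
  have base : ∀ n : Fin 3 →₀ ℕ, n j = 0 → Finsupp.degree n = k + 1 →
      ((k : ℝ) + 3) * coeff n f
        - coeff n (aeval (Function.update X j (1 : R3)) g)
        - coeff n (aeval (Function.update X j (1 : R3)) h) = 0 := by
    intro n hnj hdeg
    have := congrArg (coeff n) hid
    rw [coeff_add, coeff_sub, coeff_sub, coeff_C_mul, coeff_zero,
      coeff_W_zero hW hW0 hnj hdeg] at this
    linarith [this]
  refine ⟨?_, ?_, ?_⟩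
  · intro n hnj hdeg hng hnh
    have hb := base n hnj hdeg
    rw [coeff_A1_bizero hg hgl hng, coeff_A1_bizero hh hhl hnh] at hb
    have : ((k : ℝ) + 3) * coeff n f = 0 := by linarith
    exact (mul_eq_zero.mp this).resolve_left hk3
  · set n := Finsupp.single lg (k + 1) with hn
    have hnj : n j = 0 := by rw [hn, Finsupp.single_eq_of_ne' hg]
    have hdeg : Finsupp.degree n = k + 1 := deg_single lg (k + 1)
    have hb := base n hnj hdeg
    rw [coeff_A1_bizero hg hgl (by rw [hn, Finsupp.single_eq_same]; omega),
      coeff_sub1_top hhdeg hnj hdeg] at hb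
    linarith
  · set n := Finsupp.single lh (k + 1) with hn
    have hnj : n j = 0 := by rw [hn, Finsupp.single_eq_of_ne' hh]
    have hdeg : Finsupp.degree n = k + 1 := deg_single lh (k + 1)
    have hb := base n hnj hdeg
    rw [coeff_A1_bizero hh hhl (by rw [hn, Finsupp.single_eq_same]; omega),
      coeff_sub1_top hgdeg hnj hdeg] at hb
    linarith


lemma cancel_pair {A x y : ℝ} (hA : A * A ≠ 1) (h1 : A * x = y) (h2 : A * y = x) :
    x = 0 ∧ y = 0 := by
  have hx : (A * A - 1) * x = 0 := by linear_combination A * h1 + h2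
  have hx0 : x = 0 := by
    rcases mul_eq_zero.mp hx with h | h
    · exact absurd (by linarith : A * A = 1) hA
    · exact h
  exact ⟨hx0, by rw [← h1, hx0, mul_zero]⟩

/-- On the unit cube, the divergence-free normal-trace-free bubble fields of
`𝐏_{k+1} ⊕ ∇×δE^{3,I}_{k+2}` are exactly those of `𝐏_{k+1}`. -/
theorem stmt_17 (k : ℕ) :
    {v : Vec3 | (∃ w u : Vec3, memP3 (k + 1) w ∧ memDeltaE k u ∧
        v = w + curl3 u) ∧ normalTraceZero v ∧ div3 v = 0} =
    {v : Vec3 | memP3 (k + 1) v ∧ normalTraceZero v ∧ div3 v = 0} := by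
  ext v
  simp only [Set.mem_setOf_eq]
  constructor
  · rintro ⟨⟨w, u, hw, hu, hv⟩, hnt, hdiv⟩
    refine ⟨?_, hnt, hdiv⟩
    obtain ⟨p, q, r, hp, hp0, hq, hq1, hr, hr2, hueq⟩ := hu
    have dp0 : pderiv 0 p = 0 := pderiv_zero_of_support hp0
    have dq1 : pderiv 1 q = 0 := pderiv_zero_of_support hq1
    have dr2 : pderiv 2 r = 0 := pderiv_zero_of_support hr2
    have hcast : ((k + 1 : ℕ) : ℝ) = (k : ℝ) + 1 := by push_cast; ring
    have heulp : X 1 * pderiv 1 p + X 2 * pderiv 2 p = C ((k : ℝ) + 1) * p := by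
      have h := euler3 hp
      rw [dp0, mul_zero, zero_add, smul_eq_C_mul, hcast] at h
      exact h
    have heulq : X 0 * pderiv 0 q + X 2 * pderiv 2 q = C ((k : ℝ) + 1) * q := by
      have h := euler3 hq
      rw [dq1, mul_zero, add_zero, smul_eq_C_mul, hcast] at h
      exact h
    have heulr : X 0 * pderiv 0 r + X 1 * pderiv 1 r = C ((k : ℝ) + 1) * r := by
      have h := euler3 hr
      rw [dr2, mul_zero, add_zero, smul_eq_C_mul, hcast] at h
      exact h
    -- curl components
    have hcurl1 : (curl3 u).1 = C ((k : ℝ) + 3) * (X 0 * p) - X 0 * q - X 0 * r := by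
      show pderiv 1 u.2.2 - pderiv 2 u.2.1 = _
      have h3 : u.2.2 = X 0 * p * X 1 + -(X 1 * q * X 0) + 0 := by rw [hueq]; rfl
      have h2 : u.2.1 = -(X 0 * p * X 2) + 0 + X 2 * r * X 0 := by rw [hueq]; rfl
      rw [h3, h2]
      exact comp1_formula k p q r dp0 dq1 dr2 heulp
    have hcurl2 : (curl3 u).2.1 = C ((k : ℝ) + 3) * (X 1 * q) - X 1 * p - X 1 * r := by
      show pderiv 2 u.1 - pderiv 0 u.2.2 = _
      have h1 : u.1 = 0 + X 1 * q * X 2 + -(X 2 * r * X 1) := by rw [hueq]; rfl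
      have h3 : u.2.2 = X 0 * p * X 1 + -(X 1 * q * X 0) + 0 := by rw [hueq]; rfl
      rw [h1, h3]
      exact comp2_formula k p q r dp0 dq1 dr2 heulq
    have hcurl3 : (curl3 u).2.2 = C ((k : ℝ) + 3) * (X 2 * r) - X 2 * p - X 2 * q := by
      show pderiv 0 u.2.1 - pderiv 1 u.1 = _
      have h2 : u.2.1 = -(X 0 * p * X 2) + 0 + X 2 * r * X 0 := by rw [hueq]; rfl
      have h1 : u.1 = 0 + X 1 * q * X 2 + -(X 2 * r * X 1) := by rw [hueq]; rfl
      rw [h2, h1]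
      exact comp3_formula k p q r dp0 dq1 dr2 heulr
    -- v components
    have hv1 : v.1 = w.1 + (C ((k : ℝ) + 3) * (X 0 * p) - X 0 * q - X 0 * r) := by
      rw [hv, Prod.fst_add, hcurl1]
    have hv2 : v.2.1 = w.2.1 + (C ((k : ℝ) + 3) * (X 1 * q) - X 1 * p - X 1 * r) := by
      rw [hv, Prod.snd_add, Prod.fst_add, hcurl2]
    have hv3 : v.2.2 = w.2.2 + (C ((k : ℝ) + 3) * (X 2 * r) - X 2 * p - X 2 * q) := by
      rw [hv, Prod.snd_add, Prod.snd_add, hcurl3]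
    -- face conditions as polynomial identities
    have f0a := face0 v.1 0 (fun y z hy hz => ((hnt.1 y z hy hz).1))
    have f0b := face0 v.1 1 (fun y z hy hz => ((hnt.1 y z hy hz).2))
    have f1a := face1 v.2.1 0 (fun x z hx hz => ((hnt.2.1 x z hx hz).1))
    have f1b := face1 v.2.1 1 (fun x z hx hz => ((hnt.2.1 x z hx hz).2))
    have f2a := face2 v.2.2 0 (fun x y hx hy => ((hnt.2.2 x y hx hy).1))
    have f2b := face2 v.2.2 1 (fun x y hx hy => ((hnt.2.2 x y hx hy).2))
    rw [map_zero] at f0a f1a f2a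
    rw [map_one] at f0b f1b f2b
    -- w-parts vanish on the zero faces
    have hW0x : aeval (Function.update X 0 (0 : R3)) w.1 = 0 := by
      rw [hv1, map_add] at f0a
      have hz : aeval (Function.update X (0 : Fin 3) (0 : R3))
          (C ((k : ℝ) + 3) * (X 0 * p) - X 0 * q - X 0 * r) = 0 := by
        simp [map_sub, map_mul, aeval_X]
      rw [hz, add_zero] at f0a
      exact f0a
    have hW0y : aeval (Function.update X 1 (0 : R3)) w.2.1 = 0 := by
      rw [hv2, map_add] at f1a
      have hz : aeval (Function.update X (1 : Fin 3) (0 : R3))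
          (C ((k : ℝ) + 3) * (X 1 * q) - X 1 * p - X 1 * r) = 0 := by
        simp [map_sub, map_mul, aeval_X]
      rw [hz, add_zero] at f1a
      exact f1a
    have hW0z : aeval (Function.update X 2 (0 : R3)) w.2.2 = 0 := by
      rw [hv3, map_add] at f2a
      have hz : aeval (Function.update X (2 : Fin 3) (0 : R3))
          (C ((k : ℝ) + 3) * (X 2 * r) - X 2 * p - X 2 * q) = 0 := by
        simp [map_sub, map_mul, aeval_X]
      rw [hz, add_zero] at f2a
      exact f2a
    -- the one-face identities
    have F1 : aeval (Function.update X 0 (1 : R3)) w.1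
        + (C ((k : ℝ) + 3) * p - aeval (Function.update X 0 (1 : R3)) q
            - aeval (Function.update X 0 (1 : R3)) r) = 0 := by
      rw [hv1, map_add] at f0b
      have hc : aeval (Function.update X (0 : Fin 3) (1 : R3))
          (C ((k : ℝ) + 3) * (X 0 * p) - X 0 * q - X 0 * r)
          = C ((k : ℝ) + 3) * p - aeval (Function.update X 0 (1 : R3)) q
            - aeval (Function.update X 0 (1 : R3)) r := by
        simp only [map_sub, map_mul, aeval_X, Function.update_self, one_mul, aeval_C,
          algebraMap_eq, aeval_invariant hp0]
      rw [hc] at f0b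
      exact f0b
    have F2 : aeval (Function.update X 1 (1 : R3)) w.2.1
        + (C ((k : ℝ) + 3) * q - aeval (Function.update X 1 (1 : R3)) p
            - aeval (Function.update X 1 (1 : R3)) r) = 0 := by
      rw [hv2, map_add] at f1b
      have hc : aeval (Function.update X (1 : Fin 3) (1 : R3))
          (C ((k : ℝ) + 3) * (X 1 * q) - X 1 * p - X 1 * r)
          = C ((k : ℝ) + 3) * q - aeval (Function.update X 1 (1 : R3)) p
            - aeval (Function.update X 1 (1 : R3)) r := by
        simp only [map_sub, map_mul, aeval_X, Function.update_self, one_mul, aeval_C,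
          algebraMap_eq, aeval_invariant hq1]
      rw [hc] at f1b
      exact f1b
    have F3 : aeval (Function.update X 2 (1 : R3)) w.2.2
        + (C ((k : ℝ) + 3) * r - aeval (Function.update X 2 (1 : R3)) p
            - aeval (Function.update X 2 (1 : R3)) q) = 0 := by
      rw [hv3, map_add] at f2b
      have hc : aeval (Function.update X (2 : Fin 3) (1 : R3))
          (C ((k : ℝ) + 3) * (X 2 * r) - X 2 * p - X 2 * q)
          = C ((k : ℝ) + 3) * r - aeval (Function.update X 2 (1 : R3)) p
            - aeval (Function.update X 2 (1 : R3)) q := by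
        simp only [map_sub, map_mul, aeval_X, Function.update_self, one_mul, aeval_C,
          algebraMap_eq, aeval_invariant hr2]
      rw [hc] at f2b
      exact f2b
    -- coefficient relations
    obtain ⟨hpmix, hp1r, hp2q⟩ := keyrel (k := k) (show (1 : Fin 3) ≠ 0 by decide)
      (show (2 : Fin 3) ≠ 0 by decide) hw.1 hW0x hq1 hq.totalDegree_le hr2 hr.totalDegree_le F1
    obtain ⟨hqmix, hq0r, hq2p⟩ := keyrel (k := k) (show (0 : Fin 3) ≠ 1 by decide)
      (show (2 : Fin 3) ≠ 1 by decide) hw.2.1 hW0y hp0 hp.totalDegree_le hr2 hr.totalDegree_le F2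
    obtain ⟨hrmix, hr0q, hr1p⟩ := keyrel (k := k) (show (0 : Fin 3) ≠ 2 by decide)
      (show (1 : Fin 3) ≠ 2 by decide) hw.2.2 hW0z hp0 hp.totalDegree_le hq1 hq.totalDegree_le F3
    -- pure coefficients vanish
    have hk3 : ((k : ℝ) + 3) * ((k : ℝ) + 3) ≠ 1 := by
      have hk0 : (0 : ℝ) ≤ (k : ℝ) := Nat.cast_nonneg k
      intro h
      nlinarith
    obtain ⟨hp1, hr1⟩ := cancel_pair hk3 hp1r hr1p
    obtain ⟨hp2, hq2⟩ := cancel_pair hk3 hp2q hq2p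
    obtain ⟨hq0, hr0⟩ := cancel_pair hk3 hq0r hr0q
    -- p = q = r = 0
    have hpz : p = 0 := by
      ext μ
      rw [coeff_zero]
      by_cases hsup : μ ∈ p.support
      · have h0 : μ 0 = 0 := hp0 μ hsup
        have hdeg : Finsupp.degree μ = k + 1 := supp_deg hp hsup
        have hsum : μ 0 + μ 1 + μ 2 = k + 1 := by rw [← deg3]; exact hdeg
        rcases Nat.eq_zero_or_pos (μ 1) with h1 | h1
        · have : μ = Finsupp.single 2 (k + 1) := by
            ext i
            fin_cases i <;> simp [Finsupp.single_apply, Fin.ext_iff, h0, h1] <;> omega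
          rw [this]; exact hp2
        · rcases Nat.eq_zero_or_pos (μ 2) with h2 | h2
          · have : μ = Finsupp.single 1 (k + 1) := by
              ext i
              fin_cases i <;> simp [Finsupp.single_apply, Fin.ext_iff, h0, h1, h2] <;> omega
            rw [this]; exact hp1
          · exact hpmix μ h0 hdeg h1 h2
      · exact notMem_support_iff.mp hsup
    have hqz : q = 0 := by
      ext μ
      rw [coeff_zero]
      by_cases hsup : μ ∈ q.support
      · have h0 : μ 1 = 0 := hq1 μ hsup
        have hdeg : Finsupp.degree μ = k + 1 := supp_deg hq hsup
        have hsum : μ 0 + μ 1 + μ 2 = k + 1 := by rw [← deg3]; exact hdeg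
        rcases Nat.eq_zero_or_pos (μ 0) with h1 | h1
        · have : μ = Finsupp.single 2 (k + 1) := by
            ext i
            fin_cases i <;> simp [Finsupp.single_apply, Fin.ext_iff, h0, h1] <;> omega
          rw [this]; exact hq2
        · rcases Nat.eq_zero_or_pos (μ 2) with h2 | h2
          · have : μ = Finsupp.single 0 (k + 1) := by
              ext i
              fin_cases i <;> simp [Finsupp.single_apply, Fin.ext_iff, h0, h1, h2] <;> omega
            rw [this]; exact hq0
          · exact hqmix μ h0 hdeg h1 h2
      · exact notMem_support_iff.mp hsup
    have hrz : r = 0 := by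
      ext μ
      rw [coeff_zero]
      by_cases hsup : μ ∈ r.support
      · have h0 : μ 2 = 0 := hr2 μ hsup
        have hdeg : Finsupp.degree μ = k + 1 := supp_deg hr hsup
        have hsum : μ 0 + μ 1 + μ 2 = k + 1 := by rw [← deg3]; exact hdeg
        rcases Nat.eq_zero_or_pos (μ 0) with h1 | h1
        · have : μ = Finsupp.single 1 (k + 1) := by
            ext i
            fin_cases i <;> simp [Finsupp.single_apply, Fin.ext_iff, h0, h1] <;> omega
          rw [this]; exact hr1
        · rcases Nat.eq_zero_or_pos (μ 1) with h2 | h2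
          · have : μ = Finsupp.single 0 (k + 1) := by
              ext i
              fin_cases i <;> simp [Finsupp.single_apply, Fin.ext_iff, h0, h1, h2] <;> omega
            rw [this]; exact hr0
          · exact hrmix μ h0 hdeg h1 h2
      · exact notMem_support_iff.mp hsup
    -- conclude
    have huz : u = 0 := by
      rw [hueq, hpz, hqz, hrz]
      simp [Prod.ext_iff]
    have hcz : curl3 u = 0 := by
      rw [huz]
      simp [curl3, Prod.ext_iff]
    rw [hv, hcz, add_zero]
    exact hw

  · rintro ⟨hP, hnt, hdiv⟩
    refine ⟨⟨v, 0, hP, ?_, ?_⟩, hnt, hdiv⟩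
    · refine ⟨0, 0, 0, isHomogeneous_zero _ _ _, by simp, isHomogeneous_zero _ _ _, by simp,
        isHomogeneous_zero _ _ _, by simp, ?_⟩
      simp [Prod.ext_iff]
    · have : curl3 (0 : Vec3) = 0 := by
        simp [curl3, Prod.ext_iff]
      rw [this, add_zero]
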